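/- arXiv:1902.05635 — 7 statements merged into one kernel-verified Lean document; each statement's English description precedes it below -/
import Mathlib

section
/- Conservation of charge for the graph: for every time t, the total charge is preserved, i.e. ∑_{i∈V} x_i^{t+1} = ∑_{i∈V} x_i^t. -/
/-!
A core vertex keeps `ε` plus half of its excess `x - ε` and ships the other half out in `d_j`
equal shares, one per incident edge. Summed over all receivers, each sender's shares are counted
exactly `d_j` times, so the incoming charge equals the shed charge.
-/

open Finset

namespace SimpleGraph

variable {V : Type*} [Fintype V] (G : SimpleGraph V) [DecidableRel G.Adj]

theorem sum_sum_neighborFinset {M : Type*} [AddCommMonoid M] (f : V → M) :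
    ∑ i, ∑ j ∈ G.neighborFinset i, f j = ∑ j, G.degree j • f j := by
  rw [Finset.sum_comm' (t' := univ) (s' := fun j => G.neighborFinset j) (by simp [adj_comm])]
  simp only [sum_const, card_neighborFinset_eq_degree]

theorem sum_sum_neighborFinset_div_degree (hdeg : ∀ i, 0 < G.degree i) (g : V → ℝ) :
    ∑ i, ∑ j ∈ G.neighborFinset i, g j / G.degree j = ∑ j, g j := by
  rw [sum_sum_neighborFinset]
  refine sum_congr rfl fun j _ => ?_
  have hj : (G.degree j : ℝ) ≠ 0 := by exact_mod_cast (hdeg j).ne'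
  rw [nsmul_eq_mul, mul_div_cancel₀ _ hj]

end SimpleGraph

theorem retained_add_half_excess (ε a z : ℝ) :
    (ε + (a - ε) / 2) * z + a * (1 - z) + 1 / 2 * (z * (a - ε)) = a := by
  ring

theorem charge_conservation_general
    {V : Type*} [Fintype V]
    (G : SimpleGraph V) [DecidableRel G.Adj]
    (hdeg : ∀ i : V, 0 < G.degree i)
    (ε : ℝ) (x : ℕ → V → ℝ)
    (hupd : ∀ (t : ℕ) (i : V),
      x (t + 1) i =
        (ε + (x t i - ε) / 2) * (if ε < x t i then (1 : ℝ) else 0)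
          + x t i * (1 - (if ε < x t i then (1 : ℝ) else 0))
          + (1 / 2) * ∑ j ∈ G.neighborFinset i,
              (if ε < x t j then (1 : ℝ) else 0) * (x t j - ε) / (G.degree j))
    (t : ℕ) :
    ∑ i, x (t + 1) i = ∑ i, x t i := by
  simp only [hupd, sum_add_distrib]
  rw [← mul_sum, G.sum_sum_neighborFinset_div_degree hdeg, mul_sum, ← sum_add_distrib,
    ← sum_add_distrib]
  exact sum_congr rfl fun i _ => retained_add_half_excess ε (x t i) _

/-- **Conservation of charge for the graph.** In the charge redistribution process on a
finite simple graph `G` (every vertex having at least one neighbor), with threshold `ε`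
and update rule
`x_i^{t+1} = (ε + (x_i^t − ε)/2)·z_i^t + x_i^t·(1 − z_i^t)
             + (1/2)·∑_{j ~ i} z_j^t·(x_j^t − ε)/d_j`
where `z_i^t = 1` iff `x_i^t > ε`, the total charge is preserved at every time `t`:
`∑_{i∈V} x_i^{t+1} = ∑_{i∈V} x_i^t`. -/
theorem charge_conservation
    {V : Type*} [Fintype V] [DecidableEq V]
    (G : SimpleGraph V) [DecidableRel G.Adj]
    (hdeg : ∀ i : V, 0 < G.degree i)
    (ε : ℝ) (x : ℕ → V → ℝ)
    (hupd : ∀ (t : ℕ) (i : V),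
      x (t + 1) i =
        (ε + (x t i - ε) / 2) * (if ε < x t i then (1 : ℝ) else 0)
          + x t i * (1 - (if ε < x t i then (1 : ℝ) else 0))
          + (1 / 2) * ∑ j ∈ G.neighborFinset i,
              (if ε < x t j then (1 : ℝ) else 0) * (x t j - ε) / (G.degree j))
    (t : ℕ) :
    ∑ i, x (t + 1) i = ∑ i, x t i :=
  charge_conservation_general G hdeg ε x hupd t
end

section
/- Core persistence (part of Theorem 1(i)): if ε ≥ 0 and x_j^t ≥ 0 for every vertex j, then every core vertex at time t is still a core vertex at time t+1; that is, x_i^t > ε implies x_i^{t+1} > ε. In particular the set of core vertices is nondecreasing in t. -/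
lemma ite_one_zero_mul_sub_nonneg (ε a : ℝ) :
    0 ≤ (if ε < a then (1 : ℝ) else 0) * (a - ε) := by
  split_ifs with h
  · linarith
  · simp

lemma sum_ite_one_zero_mul_sub_div_nonneg {ι : Type*} (s : Finset ι) (ε : ℝ) (y : ι → ℝ)
    (d : ι → ℕ) :
    0 ≤ ∑ j ∈ s, (if ε < y j then (1 : ℝ) else 0) * (y j - ε) / (d j) :=
  Finset.sum_nonneg fun j _ => div_nonneg (ite_one_zero_mul_sub_nonneg ε (y j)) (Nat.cast_nonneg _)

theorem core_persistence_general
    {V : Type*} [Fintype V]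
    (G : SimpleGraph V) [DecidableRel G.Adj]
    (ε : ℝ) (x : ℕ → V → ℝ)
    (hupd : ∀ (t : ℕ) (i : V),
      x (t + 1) i =
        (ε + (x t i - ε) / 2) * (if ε < x t i then (1 : ℝ) else 0)
          + x t i * (1 - (if ε < x t i then (1 : ℝ) else 0))
          + (1 / 2) * ∑ j ∈ G.neighborFinset i,
              (if ε < x t j then (1 : ℝ) else 0) * (x t j - ε) / (G.degree j))
    (t : ℕ)
    (i : V) (hi : ε < x t i) :
    ε < x (t + 1) i := by
  have hinflow := sum_ite_one_zero_mul_sub_div_nonneg (G.neighborFinset i) ε (x t) (G.degree ·)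
  rw [hupd t i, if_pos hi]
  linarith

/-- **Core persistence (Theorem 1(i), part).** If `ε ≥ 0` and all charges at time `t` are
nonnegative, then every core vertex at time `t` is still a core vertex at time `t+1`:
`x_i^t > ε → x_i^{t+1} > ε`. Hence the set of core vertices is nondecreasing in `t`. -/
theorem core_persistence
    {V : Type*} [Fintype V] [DecidableEq V]
    (G : SimpleGraph V) [DecidableRel G.Adj]
    (hdeg : ∀ i : V, 0 < G.degree i)
    (ε : ℝ) (x : ℕ → V → ℝ)
    (hupd : ∀ (t : ℕ) (i : V),
      x (t + 1) i =
        (ε + (x t i - ε) / 2) * (if ε < x t i then (1 : ℝ) else 0)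
          + x t i * (1 - (if ε < x t i then (1 : ℝ) else 0))
          + (1 / 2) * ∑ j ∈ G.neighborFinset i,
              (if ε < x t j then (1 : ℝ) else 0) * (x t j - ε) / (G.degree j))
    (hε : 0 ≤ ε) (t : ℕ) (hnn : ∀ j : V, 0 ≤ x t j)
    (i : V) (hi : ε < x t i) :
    ε < x (t + 1) i :=
  core_persistence_general G ε x hupd t i hi
end

section
/- Upper bound on individual charge (part of Theorem 1(i)): if ε ≥ 0, x_i^0 ≥ 0 for every vertex i, and ∑_{i∈V} x_i^0 = 1, then for every time t and every vertex i, x_i^t ≤ 1. -/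
/-!
Write `e(a) = (a - ε)⁺` for the excess of a charge over the threshold. One step replaces `x i` by
`x i - e(x i) / 2 + ½ ∑_{j ~ i} e(x j) / d_j`: a core vertex keeps half its excess and spreads the
other half evenly over its neighbours. For `ε ≥ 0` the retained part `(x i + ε) / 2` is nonnegative,
so charges stay nonnegative; and summing over `i`, each vertex `j` receives back at most the
`e(x j) / 2` it gave away, so the total charge never exceeds its initial value `1`. A nonnegative
charge is at most the total.
-/

open Finset

namespace ChargeRedistribution

variable {V : Type*} [Fintype V]

noncomputable def excess (ε a : ℝ) : ℝ := (if ε < a then (1 : ℝ) else 0) * (a - ε)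

lemma excess_nonneg (ε a : ℝ) : 0 ≤ excess ε a := by
  unfold excess
  split_ifs <;> linarith

lemma excess_div_two_le {ε a : ℝ} (hε : 0 ≤ ε) (ha : 0 ≤ a) : excess ε a / 2 ≤ a := by
  unfold excess
  split_ifs <;> linarith

section Graph

variable (G : SimpleGraph V) [DecidableRel G.Adj]

lemma sum_sum_neighborFinset_eq_sum_degree_mul (g : V → ℝ) :
    ∑ i, ∑ j ∈ G.neighborFinset i, g j = ∑ j, G.degree j * g j := by
  rw [sum_comm' (t' := univ) (s' := fun j => G.neighborFinset j) (by simp [G.adj_comm])]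
  simp only [sum_const, G.card_neighborFinset_eq_degree, nsmul_eq_mul]

lemma sum_sum_neighborFinset_div_degree_le {f : V → ℝ} (hf : ∀ j, 0 ≤ f j) :
    ∑ i, ∑ j ∈ G.neighborFinset i, f j / G.degree j ≤ ∑ j, f j := by
  rw [sum_sum_neighborFinset_eq_sum_degree_mul]
  refine sum_le_sum fun j _ => ?_
  rcases eq_or_ne (G.degree j : ℝ) 0 with hd | hd
  · simpa [hd] using hf j
  · rw [mul_div_cancel₀ _ hd]

noncomputable def step (ε : ℝ) (y : V → ℝ) (i : V) : ℝ :=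
  y i - excess ε (y i) / 2 + (1 / 2) * ∑ j ∈ G.neighborFinset i, excess ε (y j) / G.degree j

lemma step_nonneg {ε : ℝ} (hε : 0 ≤ ε) {y : V → ℝ} (hy : ∀ i, 0 ≤ y i) (i : V) :
    0 ≤ step G ε y i := by
  have hflow : 0 ≤ ∑ j ∈ G.neighborFinset i, excess ε (y j) / G.degree j :=
    sum_nonneg fun j _ => div_nonneg (excess_nonneg ε (y j)) (Nat.cast_nonneg _)
  have := excess_div_two_le hε (hy i)
  unfold step
  linarith

lemma sum_step_le (ε : ℝ) (y : V → ℝ) : ∑ i, step G ε y i ≤ ∑ i, y i := by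
  have hflow := sum_sum_neighborFinset_div_degree_le G fun j => excess_nonneg ε (y j)
  simp only [step, sum_add_distrib, sum_sub_distrib, ← mul_sum, ← sum_div]
  linarith

end Graph

end ChargeRedistribution

open ChargeRedistribution in
theorem charge_upper_bound_general
    {V : Type*} [Fintype V]
    (G : SimpleGraph V) [DecidableRel G.Adj]
    (ε : ℝ) (x : ℕ → V → ℝ)
    (hupd : ∀ (t : ℕ) (i : V),
      x (t + 1) i =
        (ε + (x t i - ε) / 2) * (if ε < x t i then (1 : ℝ) else 0)
          + x t i * (1 - (if ε < x t i then (1 : ℝ) else 0))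
          + (1 / 2) * ∑ j ∈ G.neighborFinset i,
              (if ε < x t j then (1 : ℝ) else 0) * (x t j - ε) / (G.degree j))
    (hε : 0 ≤ ε) (hnn : ∀ i : V, 0 ≤ x 0 i) (hsum : ∑ i, x 0 i = 1) :
    ∀ (t : ℕ) (i : V), x t i ≤ 1 := by
  have hstep : ∀ t, x (t + 1) = step G ε (x t) := fun t => funext fun i => by
    rw [hupd, step]
    unfold excess
    split_ifs <;> ring
  have hnonneg : ∀ t i, 0 ≤ x t i := by
    intro t
    induction t with
    | zero => exact hnn
    | succ t ih => rw [hstep]; exact step_nonneg G hε ih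
  have htotal : ∀ t, ∑ i, x t i ≤ 1 := by
    intro t
    induction t with
    | zero => exact hsum.le
    | succ t ih => rw [hstep]; exact (sum_step_le G ε (x t)).trans ih
  intro t i
  exact (single_le_sum (fun j _ => hnonneg t j) (mem_univ i)).trans (htotal t)

/-- **Upper bound on individual charge (Theorem 1(i), part).** If `ε ≥ 0`, the initial charges
are nonnegative, and the total initial charge is `1`, then every charge is at most `1` at all
times. -/
theorem charge_upper_bound
    {V : Type*} [Fintype V] [DecidableEq V]
    (G : SimpleGraph V) [DecidableRel G.Adj]
    (hdeg : ∀ i : V, 0 < G.degree i)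
    (ε : ℝ) (x : ℕ → V → ℝ)
    (hupd : ∀ (t : ℕ) (i : V),
      x (t + 1) i =
        (ε + (x t i - ε) / 2) * (if ε < x t i then (1 : ℝ) else 0)
          + x t i * (1 - (if ε < x t i then (1 : ℝ) else 0))
          + (1 / 2) * ∑ j ∈ G.neighborFinset i,
              (if ε < x t j then (1 : ℝ) else 0) * (x t j - ε) / (G.degree j))
    (hε : 0 ≤ ε) (hnn : ∀ i : V, 0 ≤ x 0 i) (hsum : ∑ i, x 0 i = 1) :
    ∀ (t : ℕ) (i : V), x t i ≤ 1 :=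
  charge_upper_bound_general G ε x hupd hε hnn hsum
end

section
/- Connectivity of the core (Theorem 1(ii)): suppose 0 < ε < 1 and the initial charge is concentrated at a single vertex i0. Then for every time t, the subgraph of G induced by the vertex set {i ∈ V : x_i^t > ε} ∪ {i0} is connected. -/
/-!
A core vertex keeps a charge above `ε`: it retains `ε + (x - ε)/2` and only receives further
charge. A vertex can only rise above `ε` by receiving charge, and charge is only sent by core
vertices, so every new core vertex is adjacent to an old one. Hence the core grows by attaching
vertices to an already connected set, starting from `{i0}`, which is the whole initial core
since `ε > 0`.
-/

open Finset

namespace SimpleGraph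

variable {V : Type*} (G : SimpleGraph V)

lemma induce_singleton_connected (v : V) : (G.induce {v}).Connected := by
  rw [induce_singleton_eq_top]
  exact connected_top

lemma induce_connected_of_forall_exists_adj {A B : Set V} (hAB : A ⊆ B)
    (hA : (G.induce A).Connected) (hB : ∀ b ∈ B, b ∈ A ∨ ∃ a ∈ A, G.Adj a b) :
    (G.induce B).Connected := by
  obtain ⟨⟨u, hu⟩⟩ := hA.nonempty
  refine G.induce_connected_of_patches u (hAB hu) fun {b} hb => ?_
  rcases hB b hb with hbA | ⟨a, haA, hab⟩
  · exact ⟨A, hAB, hu, hbA, hA.preconnected _ _⟩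
  · have hpatch : A ∪ {a, b} ⊆ B := by
      rintro w (hw | rfl | rfl)
      exacts [hAB hw, hAB haA, hb]
    exact ⟨A ∪ {a, b}, hpatch, Or.inl hu, Or.inr (Or.inr rfl),
      (G.induce_union_connected hA.preconnected (G.induce_pair_connected_of_adj hab).preconnected
        ⟨a, haA, Or.inl rfl⟩).preconnected _ _⟩

end SimpleGraph

section Redistribution

variable {V : Type*} [Fintype V] (G : SimpleGraph V) [DecidableRel G.Adj] (ε : ℝ)

noncomputable def inflow (y : V → ℝ) (i : V) : ℝ :=
  (1 / 2) * ∑ j ∈ G.neighborFinset i,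
    (if ε < y j then (1 : ℝ) else 0) * (y j - ε) / G.degree j

def IsRedistribution (x : ℕ → V → ℝ) : Prop :=
  ∀ t i, x (t + 1) i = (if ε < x t i then (ε + x t i) / 2 else x t i) + inflow G ε (x t) i

lemma isRedistribution_of_update {x : ℕ → V → ℝ}
    (hupd : ∀ (t : ℕ) (i : V),
      x (t + 1) i =
        (ε + (x t i - ε) / 2) * (if ε < x t i then (1 : ℝ) else 0)
          + x t i * (1 - (if ε < x t i then (1 : ℝ) else 0))
          + (1 / 2) * ∑ j ∈ G.neighborFinset i,
              (if ε < x t j then (1 : ℝ) else 0) * (x t j - ε) / (G.degree j)) :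
    IsRedistribution G ε x := by
  intro t i
  rw [hupd t i, inflow]
  split_ifs <;> ring

variable {G ε}

lemma inflow_nonneg (y : V → ℝ) (i : V) : 0 ≤ inflow G ε y i := by
  refine mul_nonneg (by norm_num) (sum_nonneg fun j _ => ?_)
  split_ifs with hj
  · exact div_nonneg (by linarith) (Nat.cast_nonneg _)
  · simp

lemma exists_adj_core_of_inflow_pos {y : V → ℝ} {i : V} (h : 0 < inflow G ε y i) :
    ∃ j, G.Adj i j ∧ ε < y j := by
  have hsum := pos_of_mul_pos_right h (by norm_num)
  obtain ⟨j, hj, hpos⟩ := exists_lt_of_sum_lt (f := fun _ => (0 : ℝ)) (by simpa using hsum)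
  refine ⟨j, (G.mem_neighborFinset i j).mp hj, ?_⟩
  by_contra hcore
  simp [hcore] at hpos

namespace IsRedistribution

variable {x : ℕ → V → ℝ}

lemma lt_succ_of_lt (hx : IsRedistribution G ε x) {t : ℕ} {i : V} (hi : ε < x t i) :
    ε < x (t + 1) i := by
  have := inflow_nonneg (G := G) (ε := ε) (x t) i
  rw [hx t i, if_pos hi]
  linarith

lemma exists_adj_core_of_new_core (hx : IsRedistribution G ε x) {t : ℕ} {i : V}
    (hnew : ε < x (t + 1) i) (hold : ¬ ε < x t i) : ∃ j, G.Adj i j ∧ ε < x t j := by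
  rw [hx t i, if_neg hold] at hnew
  exact exists_adj_core_of_inflow_pos (by linarith [not_lt.mp hold])

end IsRedistribution

end Redistribution

theorem core_connected_general
    {V : Type*} [Fintype V]
    (G : SimpleGraph V) [DecidableRel G.Adj]
    (ε : ℝ) (x : ℕ → V → ℝ)
    (hupd : ∀ (t : ℕ) (i : V),
      x (t + 1) i =
        (ε + (x t i - ε) / 2) * (if ε < x t i then (1 : ℝ) else 0)
          + x t i * (1 - (if ε < x t i then (1 : ℝ) else 0))
          + (1 / 2) * ∑ j ∈ G.neighborFinset i,
              (if ε < x t j then (1 : ℝ) else 0) * (x t j - ε) / (G.degree j))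
    (hε0 : 0 < ε)
    (i0 : V) (hinit' : ∀ i : V, i ≠ i0 → x 0 i = 0) :
    ∀ t : ℕ, (G.induce ({i : V | ε < x t i} ∪ {i0})).Connected := by
  have hx := isRedistribution_of_update G ε hupd
  intro t
  induction t with
  | zero =>
    have hcore : {i : V | ε < x 0 i} ∪ {i0} = {i0} := by
      refine Set.union_eq_right.mpr fun i hi => by_contra fun hne => ?_
      have : ε < 0 := hinit' i hne ▸ hi
      linarith
    rw [hcore]
    exact G.induce_singleton_connected i0
  | succ t ih =>
    refine G.induce_connected_of_forall_exists_adj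
      (Set.union_subset_union_left _ fun i => hx.lt_succ_of_lt) ih ?_
    rintro i (hnew | rfl)
    · by_cases hold : ε < x t i
      · exact Or.inl (Or.inl hold)
      · obtain ⟨j, hij, hj⟩ := hx.exists_adj_core_of_new_core hnew hold
        exact Or.inr ⟨j, Or.inl hj, hij.symm⟩
    · exact Or.inl (Or.inr rfl)

/-- **Connectivity of the core (Theorem 1(ii)).** Suppose `0 < ε < 1` and the initial charge
is concentrated at a single vertex `i0`. Then at every time `t` the subgraph of `G` induced
by `{i : x_i^t > ε} ∪ {i0}` is connected. -/
theorem core_connected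
    {V : Type*} [Fintype V] [DecidableEq V]
    (G : SimpleGraph V) [DecidableRel G.Adj]
    (hdeg : ∀ i : V, 0 < G.degree i)
    (ε : ℝ) (x : ℕ → V → ℝ)
    (hupd : ∀ (t : ℕ) (i : V),
      x (t + 1) i =
        (ε + (x t i - ε) / 2) * (if ε < x t i then (1 : ℝ) else 0)
          + x t i * (1 - (if ε < x t i then (1 : ℝ) else 0))
          + (1 / 2) * ∑ j ∈ G.neighborFinset i,
              (if ε < x t j then (1 : ℝ) else 0) * (x t j - ε) / (G.degree j))
    (hε0 : 0 < ε) (hε1 : ε < 1)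
    (i0 : V) (hinit : x 0 i0 = 1) (hinit' : ∀ i : V, i ≠ i0 → x 0 i = 0) :
    ∀ t : ℕ, (G.induce ({i : V | ε < x t i} ∪ {i0})).Connected :=
  core_connected_general G ε x hupd hε0 i0 hinit'
end

section
/- Locality of the support (Theorem 1(iv)–(v)): suppose ε > 0 and the initial charge is concentrated at a single vertex i0. Then for every time t and every vertex i with x_i^t > 0, either i = i0 or there exist a time s < t and a vertex j adjacent to i in G with x_j^s > ε. In particular every vertex that is neither i0 nor a neighbor of a vertex that has been a core vertex has zero charge at all times. -/
/-!
A vertex that is not a core vertex and has no core neighbour neither sends nor receives charge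
in that step, so its charge is frozen. Hence a vertex `i ≠ i0` none of whose neighbours has yet
been a core vertex keeps its initial charge `0`; in particular it is not itself a core vertex,
since `ε > 0`.
-/

section ChargeRedistribution

variable {V : Type*} [Fintype V] (G : SimpleGraph V) [DecidableRel G.Adj] (ε : ℝ)
  (x : ℕ → V → ℝ)

def IsChargeRedistribution : Prop :=
  ∀ (t : ℕ) (i : V),
    x (t + 1) i =
      (ε + (x t i - ε) / 2) * (if ε < x t i then (1 : ℝ) else 0)
        + x t i * (1 - (if ε < x t i then (1 : ℝ) else 0))
        + (1 / 2) * ∑ j ∈ G.neighborFinset i,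
            (if ε < x t j then (1 : ℝ) else 0) * (x t j - ε) / (G.degree j)

variable {G ε x}

theorem charge_succ_eq_of_no_core (hupd : IsChargeRedistribution G ε x) {t : ℕ} {i : V}
    (hi : x t i ≤ ε) (hnbr : ∀ j, G.Adj i j → x t j ≤ ε) :
    x (t + 1) i = x t i := by
  have hinflow : ∑ j ∈ G.neighborFinset i,
      (if ε < x t j then (1 : ℝ) else 0) * (x t j - ε) / (G.degree j) = 0 :=
    Finset.sum_eq_zero fun j hj => by
      rw [if_neg (hnbr j ((G.mem_neighborFinset i j).mp hj)).not_gt]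
      ring
  rw [hupd, hinflow, if_neg hi.not_gt]
  ring

theorem charge_eq_zero_of_no_core_neighbor
    (hupd : IsChargeRedistribution G ε x) (hε : 0 < ε) {i : V} (hinit : x 0 i = 0) :
    ∀ t : ℕ, (∀ s < t, ∀ j, G.Adj i j → x s j ≤ ε) → x t i = 0
  | 0, _ => hinit
  | t + 1, hnbr => by
    have hzero : x t i = 0 :=
      charge_eq_zero_of_no_core_neighbor hupd hε hinit t fun s hs =>
        hnbr s (hs.trans t.lt_succ_self)
    have hi : x t i ≤ ε := hzero ▸ hε.le
    rw [charge_succ_eq_of_no_core hupd hi (hnbr t t.lt_succ_self), hzero]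

end ChargeRedistribution

theorem support_locality_general
    {V : Type*} [Fintype V]
    (G : SimpleGraph V) [DecidableRel G.Adj]
    (ε : ℝ) (x : ℕ → V → ℝ)
    (hupd : ∀ (t : ℕ) (i : V),
      x (t + 1) i =
        (ε + (x t i - ε) / 2) * (if ε < x t i then (1 : ℝ) else 0)
          + x t i * (1 - (if ε < x t i then (1 : ℝ) else 0))
          + (1 / 2) * ∑ j ∈ G.neighborFinset i,
              (if ε < x t j then (1 : ℝ) else 0) * (x t j - ε) / (G.degree j))
    (hε : 0 < ε)
    (i0 : V) (hinit' : ∀ i : V, i ≠ i0 → x 0 i = 0) :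
    ∀ (t : ℕ) (i : V), 0 < x t i →
      i = i0 ∨ ∃ s < t, ∃ j : V, G.Adj i j ∧ ε < x s j := by
  intro t i hpos
  by_contra! h
  obtain ⟨hne, hnbr⟩ := h
  exact hpos.ne' (charge_eq_zero_of_no_core_neighbor hupd hε (hinit' i hne) t hnbr)

/-- **Locality of the support (Theorem 1(iv)–(v)).** Suppose `ε > 0` and the initial charge
is concentrated at a single vertex `i0`. Then any vertex carrying positive charge at time `t`
is either `i0` itself, or is adjacent to some vertex that was a core vertex at some earlier
time `s < t`. -/
theorem support_locality
    {V : Type*} [Fintype V] [DecidableEq V]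
    (G : SimpleGraph V) [DecidableRel G.Adj]
    (hdeg : ∀ i : V, 0 < G.degree i)
    (ε : ℝ) (x : ℕ → V → ℝ)
    (hupd : ∀ (t : ℕ) (i : V),
      x (t + 1) i =
        (ε + (x t i - ε) / 2) * (if ε < x t i then (1 : ℝ) else 0)
          + x t i * (1 - (if ε < x t i then (1 : ℝ) else 0))
          + (1 / 2) * ∑ j ∈ G.neighborFinset i,
              (if ε < x t j then (1 : ℝ) else 0) * (x t j - ε) / (G.degree j))
    (hε : 0 < ε)
    (i0 : V) (hinit : x 0 i0 = 1) (hinit' : ∀ i : V, i ≠ i0 → x 0 i = 0) :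
    ∀ (t : ℕ) (i : V), 0 < x t i →
      i = i0 ∨ ∃ s < t, ∃ j : V, G.Adj i j ∧ ε < x s j :=
  support_locality_general G ε x hupd hε i0 hinit'
end

section
/- Difference identity on the core: suppose G is d-regular with d ≥ 1, t ≥ 1, vertex i is a core vertex at times t−1 and t, and every vertex j ∈ {i} ∪ N(i) has the same core status at times t−1 and t (z_j^t = z_j^{t−1}). Then x_i^{t+1} − x_i^t = (x_i^t − x_i^{t−1})/2 + (1/(2d)) · ∑_{j adjacent to i, j core at time t} (x_j^t − x_j^{t−1}). -/
/-!
At a core vertex `i` the update reads `x_i^{t+1} = ε + (x_i^t − ε)/2 + ½ ∑_{j ~ i} s_j^t`, where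
`s_j^t = z_j^t (x_j^t − ε)/d_j` is the share of its excess that `j` hands to each neighbour.
Subtracting the same formula one step earlier, the constants cancel, and since every neighbour
keeps its core status, `s_j^t − s_j^{t−1}` is `(x_j^t − x_j^{t−1})/d` for core `j` and `0` otherwise.
-/

namespace SimpleGraph

variable {V : Type*} (G : SimpleGraph V) [G.LocallyFinite] (ε : ℝ)

noncomputable def excessShare (y : V → ℝ) (j : V) : ℝ :=
  (if ε < y j then (1 : ℝ) else 0) * (y j - ε) / G.degree j

/-- The update rule: `x^{t+1} = redistribute G ε x^t`. -/
noncomputable def redistribute (y : V → ℝ) (i : V) : ℝ :=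
  (ε + (y i - ε) / 2) * (if ε < y i then (1 : ℝ) else 0)
    + y i * (1 - (if ε < y i then (1 : ℝ) else 0))
    + (1 / 2) * ∑ j ∈ G.neighborFinset i, G.excessShare ε y j

variable {G ε}

theorem redistribute_of_core {y : V → ℝ} {i : V} (hi : ε < y i) :
    G.redistribute ε y i =
      ε + (y i - ε) / 2 + (1 / 2) * ∑ j ∈ G.neighborFinset i, G.excessShare ε y j := by
  simp only [redistribute, if_pos hi]
  ring

theorem excessShare_sub_of_core_iff {y y' : V → ℝ} {j : V} (hj : ε < y j ↔ ε < y' j) :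
    G.excessShare ε y j - G.excessShare ε y' j =
      (if ε < y j then y j - y' j else 0) / G.degree j := by
  by_cases h : ε < y j
  · simp only [excessShare, if_pos h, if_pos (hj.mp h)]
    ring
  · simp only [excessShare, if_neg h, if_neg (mt hj.mpr h)]
    ring

theorem redistribute_sub_of_core {y y' : V → ℝ} {i : V} {d : ℕ}
    (hi : ε < y i) (hi' : ε < y' i)
    (hstatus : ∀ j ∈ G.neighborFinset i, (ε < y j ↔ ε < y' j))
    (hdeg : ∀ j ∈ G.neighborFinset i, G.degree j = d) :
    G.redistribute ε y i - G.redistribute ε y' i =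
      (y i - y' i) / 2 +
        (1 / (2 * (d : ℝ))) *
          ∑ j ∈ G.neighborFinset i, (if ε < y j then y j - y' j else 0) := by
  have hshares : ∑ j ∈ G.neighborFinset i, G.excessShare ε y j
      - ∑ j ∈ G.neighborFinset i, G.excessShare ε y' j
      = (1 / (d : ℝ)) * ∑ j ∈ G.neighborFinset i, (if ε < y j then y j - y' j else 0) := by
    rw [← Finset.sum_sub_distrib, Finset.mul_sum]
    refine Finset.sum_congr rfl fun j hj => ?_
    rw [excessShare_sub_of_core_iff (hstatus j hj), hdeg j hj, div_eq_inv_mul, one_div]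
  rw [redistribute_of_core hi, redistribute_of_core hi', one_div_mul_eq_div]
  linear_combination (1 / 2 : ℝ) * hshares

end SimpleGraph

theorem core_difference_identity_general
    {V : Type*} [Fintype V] [DecidableEq V]
    (G : SimpleGraph V) [DecidableRel G.Adj]
    (ε : ℝ) (x : ℕ → V → ℝ)
    (hupd : ∀ (t : ℕ) (i : V),
      x (t + 1) i =
        (ε + (x t i - ε) / 2) * (if ε < x t i then (1 : ℝ) else 0)
          + x t i * (1 - (if ε < x t i then (1 : ℝ) else 0))
          + (1 / 2) * ∑ j ∈ G.neighborFinset i,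
              (if ε < x t j then (1 : ℝ) else 0) * (x t j - ε) / (G.degree j))
    (d : ℕ) (hreg : G.IsRegularOfDegree d)
    (t : ℕ) (ht : 1 ≤ t) (i : V)
    (hcore_prev : ε < x (t - 1) i) (hcore : ε < x t i)
    (hstatus : ∀ j ∈ insert i (G.neighborFinset i), (ε < x t j ↔ ε < x (t - 1) j)) :
    x (t + 1) i - x t i =
      (x t i - x (t - 1) i) / 2 +
        (1 / (2 * (d : ℝ))) *
          ∑ j ∈ G.neighborFinset i,
            (if ε < x t j then x t j - x (t - 1) j else 0) := by
  obtain ⟨s, rfl⟩ : ∃ s, t = s + 1 := ⟨t - 1, (Nat.succ_pred_eq_of_pos ht).symm⟩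
  rw [Nat.add_sub_cancel] at hcore_prev hstatus ⊢
  have hstep : ∀ t, x (t + 1) i = G.redistribute ε (x t) i := fun t => hupd t i
  have hdiff := SimpleGraph.redistribute_sub_of_core hcore hcore_prev
    (fun j hj => hstatus j (Finset.mem_insert_of_mem hj)) (fun j _ => hreg j)
  rwa [← hstep, ← hstep] at hdiff

/-- **Difference identity on the core.** Suppose `G` is `d`-regular with `d ≥ 1`, `t ≥ 1`,
vertex `i` is a core vertex at times `t−1` and `t`, and every `j ∈ {i} ∪ N(i)` has the same
core status at times `t−1` and `t`. Then
`x_i^{t+1} − x_i^t = (x_i^t − x_i^{t−1})/2 + (1/(2d)) · ∑_{j ~ i, j core at t} (x_j^t − x_j^{t−1})`. -/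
theorem core_difference_identity
    {V : Type*} [Fintype V] [DecidableEq V]
    (G : SimpleGraph V) [DecidableRel G.Adj]
    (hdeg : ∀ i : V, 0 < G.degree i)
    (ε : ℝ) (x : ℕ → V → ℝ)
    (hupd : ∀ (t : ℕ) (i : V),
      x (t + 1) i =
        (ε + (x t i - ε) / 2) * (if ε < x t i then (1 : ℝ) else 0)
          + x t i * (1 - (if ε < x t i then (1 : ℝ) else 0))
          + (1 / 2) * ∑ j ∈ G.neighborFinset i,
              (if ε < x t j then (1 : ℝ) else 0) * (x t j - ε) / (G.degree j))
    (d : ℕ) (hd : 1 ≤ d) (hreg : G.IsRegularOfDegree d)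
    (t : ℕ) (ht : 1 ≤ t) (i : V)
    (hcore_prev : ε < x (t - 1) i) (hcore : ε < x t i)
    (hstatus : ∀ j ∈ insert i (G.neighborFinset i), (ε < x t j ↔ ε < x (t - 1) j)) :
    x (t + 1) i - x t i =
      (x t i - x (t - 1) i) / 2 +
        (1 / (2 * (d : ℝ))) *
          ∑ j ∈ G.neighborFinset i,
            (if ε < x t j then x t j - x (t - 1) j else 0) :=
  core_difference_identity_general G ε x hupd d hreg t ht i hcore_prev hcore hstatus
end

section
/- Difference recursion inequality: suppose G is d-regular with d ≥ 1, t ≥ 1, vertex i is a core vertex at times t−1 and t, and every vertex j ∈ {i} ∪ N(i) has the same core status at times t−1 and t (z_j^t = z_j^{t−1}). Then |x_i^{t+1} − x_i^t| ≤ (1/2)·|x_i^t − x_i^{t−1}| + (1/(2d)) · ∑_{j adjacent to i} |x_j^t − x_j^{t−1}|. -/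
/-- **Difference recursion inequality.** Suppose `G` is `d`-regular with `d ≥ 1`, `t ≥ 1`,
vertex `i` is a core vertex at times `t−1` and `t`, and every `j ∈ {i} ∪ N(i)` has the same
core status at times `t−1` and `t`. Then
`|x_i^{t+1} − x_i^t| ≤ (1/2)·|x_i^t − x_i^{t−1}| + (1/(2d)) · ∑_{j ~ i} |x_j^t − x_j^{t−1}|`. -/
theorem core_difference_recursion
    {V : Type*} [Fintype V] [DecidableEq V]
    (G : SimpleGraph V) [DecidableRel G.Adj]
    (hdeg : ∀ i : V, 0 < G.degree i)
    (ε : ℝ) (x : ℕ → V → ℝ)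
    (hupd : ∀ (t : ℕ) (i : V),
      x (t + 1) i =
        (ε + (x t i - ε) / 2) * (if ε < x t i then (1 : ℝ) else 0)
          + x t i * (1 - (if ε < x t i then (1 : ℝ) else 0))
          + (1 / 2) * ∑ j ∈ G.neighborFinset i,
              (if ε < x t j then (1 : ℝ) else 0) * (x t j - ε) / (G.degree j))
    (d : ℕ) (hd : 1 ≤ d) (hreg : G.IsRegularOfDegree d)
    (t : ℕ) (ht : 1 ≤ t) (i : V)
    (hcore_prev : ε < x (t - 1) i) (hcore : ε < x t i)
    (hstatus : ∀ j ∈ insert i (G.neighborFinset i), (ε < x t j ↔ ε < x (t - 1) j)) :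
    |x (t + 1) i - x t i| ≤
      (1 / 2) * |x t i - x (t - 1) i| +
        (1 / (2 * (d : ℝ))) *
          ∑ j ∈ G.neighborFinset i, |x t j - x (t - 1) j| := by
  have ht' : t - 1 + 1 = t := Nat.succ_pred_eq_of_pos ht
  have hd0 : (0:ℝ) < d := by exact_mod_cast hd
  have hzi : (if ε < x t i then (1:ℝ) else 0) = 1 := if_pos hcore
  have hzi' : (if ε < x (t-1) i then (1:ℝ) else 0) = 1 := if_pos hcore_prev
  have h1 := hupd t i
  have h2 := hupd (t-1) i
  rw [ht'] at h2
  rw [hzi] at h1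
  rw [hzi'] at h2
  have hsum : ∑ j ∈ G.neighborFinset i,
        (if ε < x t j then (1:ℝ) else 0) * (x t j - ε) / (G.degree j)
      - ∑ j ∈ G.neighborFinset i,
        (if ε < x (t-1) j then (1:ℝ) else 0) * (x (t-1) j - ε) / (G.degree j)
      = ∑ j ∈ G.neighborFinset i,
        (if ε < x t j then (1:ℝ) else 0) * (x t j - x (t-1) j) / d := by
    rw [← Finset.sum_sub_distrib]
    refine Finset.sum_congr rfl fun j hj => ?_
    have hdj : (G.degree j : ℝ) = d := by exact_mod_cast congrArg Nat.cast (hreg j)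
    have hz : (ε < x t j ↔ ε < x (t-1) j) := hstatus j (Finset.mem_insert_of_mem hj)
    rw [hdj]
    by_cases h : ε < x t j
    · rw [if_pos h, if_pos (hz.mp h)]; ring
    · rw [if_neg h, if_neg (fun h' => h (hz.mpr h'))]; ring
  have key : x (t+1) i - x t i
      = (x t i - x (t-1) i)/2
        + (1/2) * ∑ j ∈ G.neighborFinset i,
            (if ε < x t j then (1:ℝ) else 0) * (x t j - x (t-1) j) / d := by
    linear_combination h1 - h2 + (1/2) * hsum
  rw [key]
  have habs : ∀ j ∈ G.neighborFinset i,
      |(if ε < x t j then (1:ℝ) else 0) * (x t j - x (t-1) j) / d|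
        ≤ |x t j - x (t-1) j| / d := by
    intro j _
    rw [abs_div, abs_of_nonneg hd0.le, abs_mul]
    have hz1 : |(if ε < x t j then (1:ℝ) else 0)| ≤ 1 := by
      by_cases h : ε < x t j <;> simp [h]
    gcongr ?_ / (d:ℝ)
    exact mul_le_of_le_one_left (abs_nonneg _) hz1
  calc |(x t i - x (t-1) i)/2
        + (1/2) * ∑ j ∈ G.neighborFinset i,
            (if ε < x t j then (1:ℝ) else 0) * (x t j - x (t-1) j) / d|
      ≤ |(x t i - x (t-1) i)/2|
        + |(1/2) * ∑ j ∈ G.neighborFinset i,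
            (if ε < x t j then (1:ℝ) else 0) * (x t j - x (t-1) j) / d| :=
        abs_add_le _ _
    _ ≤ (1/2) * |x t i - x (t-1) i|
        + (1/2) * ∑ j ∈ G.neighborFinset i, (|x t j - x (t-1) j| / d) := by
        have h3 := (Finset.abs_sum_le_sum_abs
            (fun j => (if ε < x t j then (1:ℝ) else 0) * (x t j - x (t-1) j) / d)
            (G.neighborFinset i)).trans (Finset.sum_le_sum habs)
        have e1 : |(x t i - x (t-1) i)/2| = (1/2)*|x t i - x (t-1) i| := by
          rw [abs_div, abs_two]; ring
        have e2 : |(1/2) * ∑ j ∈ G.neighborFinset i,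
            (if ε < x t j then (1:ℝ) else 0) * (x t j - x (t-1) j) / d|
            = (1/2) * |∑ j ∈ G.neighborFinset i,
            (if ε < x t j then (1:ℝ) else 0) * (x t j - x (t-1) j) / d| := by
          rw [abs_mul]; norm_num
        rw [e1, e2]
        linarith [h3]
    _ = (1 / 2) * |x t i - x (t - 1) i| +
        (1 / (2 * (d : ℝ))) *
          ∑ j ∈ G.neighborFinset i, |x t j - x (t - 1) j| := by
        rw [← Finset.sum_div]
        field_simp
end
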